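/- arXiv:0806.2995 — 2 statements merged into one kernel-verified Lean document; each statement's English description precedes it below -/
import Mathlib

section
/- Let σ be a permutation of an 8-element set W acting with cycle type (4,4). Then the number of ⟨σ⟩-stable partitions of W into four disjoint pairs is exactly 5. -/
/-!
A partition of `W` into pairs is the same as a fixed-point-free involution `f` of `W` (send each
point to its partner), and the partition is `σ`-stable exactly when `f` commutes with `σ`. The
number of such involutions is invariant under relabelling `W`, so it depends only on the cycle
type of `σ` and can be computed for one model permutation of `Fin 8`. A map commuting with `σ`
is determined by its values at one point of each cycle, which leaves 64 candidates to check: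
the five solutions are `σ²` and the four involutions swapping the two cycles.
-/

open Equiv Finset

section StablePairing
variable {W : Type*}

def IsStablePairing (σ : Perm W) (f : W → W) : Prop :=
  Function.Involutive f ∧ (∀ x, f x ≠ x) ∧ Function.Commute f σ

instance [Fintype W] [DecidableEq W] (σ : Perm W) : DecidablePred (IsStablePairing σ) :=
  fun f => inferInstanceAs
    (Decidable ((∀ x, f (f x) = x) ∧ (∀ x, f x ≠ x) ∧ ∀ x, f (σ x) = σ (f x)))

theorem Function.Commute.perm_pow_apply {f : W → W} {σ : Perm W} (h : Function.Commute f σ)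
    (n : ℕ) (x : W) : f ((σ ^ n) x) = (σ ^ n) (f x) :=
  (h.iterate_right n) x

end StablePairing

section PairPartition
variable {W : Type*} [DecidableEq W]

def IsStablePairPartition (σ : Perm W) (P : Finset (Finset W)) : Prop :=
  (∀ p ∈ P, p.card = 2) ∧
  (∀ p ∈ P, ∀ q ∈ P, p ≠ q → Disjoint p q) ∧
  (∀ w : W, ∃ p ∈ P, w ∈ p) ∧
  (∀ p ∈ P, p.image σ ∈ P)

namespace IsStablePairPartition
variable {σ : Perm W} {P : Finset (Finset W)}

theorem exists_pair_mem (hP : IsStablePairPartition σ P) (w : W) : ∃ a, {w, a} ∈ P := by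
  obtain ⟨p, hp, hw⟩ := hP.2.2.1 w
  obtain ⟨x, y, -, rfl⟩ := card_eq_two.mp (hP.1 p hp)
  rcases mem_insert.mp hw with rfl | hwy
  · exact ⟨y, hp⟩
  · obtain rfl := mem_singleton.mp hwy
    exact ⟨x, pair_comm x w ▸ hp⟩

theorem eq_of_pair_mem (hP : IsStablePairPartition σ P) {w a b : W} (ha : {w, a} ∈ P)
    (hb : {w, b} ∈ P) : a = b := by
  have hab : ({w, a} : Finset W) = {w, b} := by
    by_contra hne
    exact disjoint_left.mp (hP.2.1 _ ha _ hb hne) (mem_insert_self w _) (mem_insert_self w _)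
  have haw : a ≠ w := by
    rintro rfl
    simpa using hP.1 _ ha
  have : a ∈ ({w, b} : Finset W) := hab ▸ mem_insert_of_mem (mem_singleton_self a)
  simpa [haw] using this

noncomputable def partner (hP : IsStablePairPartition σ P) (w : W) : W :=
  (hP.exists_pair_mem w).choose

theorem pair_partner_mem (hP : IsStablePairPartition σ P) (w : W) : {w, hP.partner w} ∈ P :=
  (hP.exists_pair_mem w).choose_spec

theorem partner_eq_iff (hP : IsStablePairPartition σ P) {w a : W} :
    hP.partner w = a ↔ {w, a} ∈ P :=
  ⟨(· ▸ hP.pair_partner_mem w), hP.eq_of_pair_mem (hP.pair_partner_mem w)⟩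

theorem isStablePairing_partner (hP : IsStablePairPartition σ P) :
    IsStablePairing σ hP.partner := by
  refine ⟨fun w => ?_, fun w hw => ?_, fun w => ?_⟩
  · rw [partner_eq_iff, pair_comm]
    exact hP.pair_partner_mem w
  · have := hP.1 _ (hP.pair_partner_mem w)
    simp [hw] at this
  · rw [partner_eq_iff]
    simpa [image_insert] using hP.2.2.2 _ (hP.pair_partner_mem w)

end IsStablePairPartition

theorem IsStablePairing.pair_eq_of_mem {σ : Perm W} {f : W → W} (hf : IsStablePairing σ f)
    {w x : W} (hx : x ∈ ({w, f w} : Finset W)) : ({w, f w} : Finset W) = {x, f x} := by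
  rcases mem_insert.mp hx with rfl | hx
  · rfl
  · rw [mem_singleton.mp hx, hf.1 w, pair_comm]

variable [Fintype W]

def pairsOf (f : W → W) : Finset (Finset W) := univ.image fun w => {w, f w}

theorem IsStablePairing.isStablePairPartition_pairsOf {σ : Perm W} {f : W → W}
    (hf : IsStablePairing σ f) : IsStablePairPartition σ (pairsOf f) := by
  refine ⟨?_, ?_, fun w => ⟨_, mem_image_of_mem _ (mem_univ w), mem_insert_self w _⟩, ?_⟩
    <;> simp only [pairsOf, forall_mem_image, mem_univ, forall_const]
  · exact fun w => card_pair (hf.2.1 w).symm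
  · intro a b hab
    rw [disjoint_left]
    intro x hxa hxb
    exact hab ((hf.pair_eq_of_mem hxa).trans (hf.pair_eq_of_mem hxb).symm)
  · intro w
    simpa [image_insert, hf.2.2 w] using
      mem_image_of_mem (fun w => ({w, f w} : Finset W)) (mem_univ (σ w))

noncomputable def stablePairingEquivPairPartition (σ : Perm W) :
    {f : W → W // IsStablePairing σ f} ≃
      {P : Finset (Finset W) // IsStablePairPartition σ P} where
  toFun f := ⟨pairsOf f.1, f.2.isStablePairPartition_pairsOf⟩
  invFun P := ⟨P.2.partner, P.2.isStablePairing_partner⟩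
  left_inv f := by
    ext w
    exact f.2.isStablePairPartition_pairsOf.partner_eq_iff.mpr (mem_image_of_mem _ (mem_univ w))
  right_inv P := by
    ext p
    simp only [pairsOf, mem_image, mem_univ, true_and]
    refine ⟨fun ⟨w, hw⟩ => hw ▸ P.2.pair_partner_mem w, fun hp => ?_⟩
    obtain ⟨x, y, -, rfl⟩ := card_eq_two.mp (P.2.1 p hp)
    exact ⟨x, by rw [P.2.partner_eq_iff.mpr hp]⟩

end PairPartition

section Relabelling
variable {W V : Type*}

theorem Equiv.Perm.cycleType_permCongr [Fintype W] [DecidableEq W] [Fintype V] [DecidableEq V]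
    (e : W ≃ V) (σ : Perm W) : (e.permCongr σ).cycleType = σ.cycleType := by
  have : e.permCongr σ = σ.extendDomain (e.trans (subtypeUnivEquiv fun _ => trivial).symm) := by
    ext x
    rw [Perm.extendDomain_apply_subtype _ _ trivial]
    rfl
  rw [this, Perm.cycleType_extendDomain]

theorem isStablePairing_arrowCongr_iff (e : W ≃ V) (σ : Perm W) (f : W → W) :
    IsStablePairing (e.permCongr σ) (e.arrowCongr e f) ↔ IsStablePairing σ f := by
  simp only [IsStablePairing, Function.Involutive, Function.Commute, Function.Semiconj,
    e.symm.forall_congr_left, arrowCongr_apply, permCongr_apply, Function.comp_apply,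
    symm_symm, symm_apply_apply, e.apply_eq_iff_eq, ne_eq]

theorem card_isStablePairing_eq_of_cycleType_eq [Fintype W] [DecidableEq W] [Fintype V]
    [DecidableEq V] (hcard : Fintype.card W = Fintype.card V) {σ : Perm W} {τ : Perm V}
    (h : σ.cycleType = τ.cycleType) :
    Nat.card {f : W → W // IsStablePairing σ f} =
      Nat.card {f : V → V // IsStablePairing τ f} := by
  let e := Fintype.equivOfCardEq hcard
  obtain ⟨g, hg⟩ := isConj_iff.mp <| Perm.isConj_iff_cycleType_eq.mpr <|
    (Perm.cycleType_permCongr e σ).trans h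
  have hτ : (e.trans g).permCongr σ = τ := by
    rw [← hg]; ext x; simp [permCongr_apply, Perm.mul_apply]
  subst hτ
  exact Nat.card_congr <| (arrowCongr (e.trans g) (e.trans g)).subtypeEquiv fun f =>
    (isStablePairing_arrowCongr_iff _ σ f).symm

end Relabelling

def twoFourCycles : Perm (Fin 8) := c[0, 1, 2, 3] * c[4, 5, 6, 7]

set_option maxRecDepth 10000 in
theorem cycleType_twoFourCycles : twoFourCycles.cycleType = {4, 4} := by decide

def cycleRep (x : Fin 8) : Fin 8 := if x < 4 then 0 else 4

theorem twoFourCycles_pow_cycleRep (x : Fin 8) :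
    (twoFourCycles ^ (x.val % 4)) (cycleRep x) = x := by
  revert x; decide

def extendFromReps (ab : Fin 8 × Fin 8) (x : Fin 8) : Fin 8 :=
  (twoFourCycles ^ (x.val % 4)) (if x < 4 then ab.1 else ab.2)

theorem extendFromReps_eq {f : Fin 8 → Fin 8} (hf : Function.Commute f twoFourCycles) :
    extendFromReps (f 0, f 4) = f := by
  ext x
  conv_rhs => rw [← twoFourCycles_pow_cycleRep x, hf.perm_pow_apply, cycleRep, apply_ite f]
  rfl

set_option maxRecDepth 10000 in
theorem card_isStablePairing_extendFromReps :
    Fintype.card {ab // IsStablePairing twoFourCycles (extendFromReps ab)} = 5 := by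
  decide

def stablePairingEquivReps :
    {f : Fin 8 → Fin 8 // IsStablePairing twoFourCycles f} ≃
      {ab // IsStablePairing twoFourCycles (extendFromReps ab)} where
  toFun f := ⟨(f.1 0, f.1 4), (extendFromReps_eq f.2.2.2).symm ▸ f.2⟩
  invFun ab := ⟨extendFromReps ab.1, ab.2⟩
  left_inv f := Subtype.ext (extendFromReps_eq f.2.2.2)
  right_inv ab := by ext <;> rfl

theorem card_isStablePairing_twoFourCycles :
    Nat.card {f : Fin 8 → Fin 8 // IsStablePairing twoFourCycles f} = 5 := by
  rw [Nat.card_congr stablePairingEquivReps, Nat.card_eq_fintype_card,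
    card_isStablePairing_extendFromReps]

/-- If σ acts on an 8-element set with two 4-cycles, there are exactly 5
σ-stable partitions of the set into four disjoint pairs. -/
theorem stable_pair_partitions_two_four_cycles
    {W : Type*} [Fintype W] [DecidableEq W] (hW : Fintype.card W = 8)
    (σ : Equiv.Perm W) (hσ : σ.cycleType = ({4, 4} : Multiset ℕ)) :
    Fintype.card {P : Finset (Finset W) //
      (∀ p ∈ P, p.card = 2) ∧
      (∀ p ∈ P, ∀ q ∈ P, p ≠ q → Disjoint p q) ∧
      (∀ w : W, ∃ p ∈ P, w ∈ p) ∧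
      (∀ p ∈ P, p.image σ ∈ P)} = 5 := by
  rw [Fintype.card_eq_nat_card]
  calc Nat.card {P : Finset (Finset W) // IsStablePairPartition σ P}
      = Nat.card {f : W → W // IsStablePairing σ f} :=
        (Nat.card_congr (stablePairingEquivPairPartition σ)).symm
    _ = Nat.card {f : Fin 8 → Fin 8 // IsStablePairing twoFourCycles f} :=
      card_isStablePairing_eq_of_cycleType_eq (by rw [hW, Fintype.card_fin])
        (hσ.trans cycleType_twoFourCycles.symm)
    _ = 5 := card_isStablePairing_twoFourCycles
end

section
/- Let σ be a permutation of an 8-element set with cycle type containing a cycle of odd length m > 1 such that no other cycle of σ has length m (e.g. cycle types (5,3), (7,1), (5,2,1), (5,1,1,1), (3,2,2,1), (3,4,1) etc., any type with an unpaired odd cycle of length > 1). Then there is no ⟨σ⟩-stable partition of the 8-element set into four disjoint pairs. -/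
/-!
The pairs define a fixed-point-free involution `τ` (each point goes to its partner) commuting
with `σ`. Hence `τ` preserves the set of points lying on `σ`-cycles of length `m`, which has
`m * σ.cycleType.count m` elements. A fixed-point-free involution of a finite set splits it
into two-element orbits, so this number is even, and for odd `m` so is the count.
-/

open Finset Equiv

namespace Equiv.Perm

variable {α : Type*} [DecidableEq α]

theorem two_dvd_card_of_sq_eq_one_of_apply_ne {τ : Perm α} (hτ : τ ^ 2 = 1) {s : Finset α}
    (hs : ∀ x, τ x ∈ s ↔ x ∈ s) (hfix : ∀ x ∈ s, τ x ≠ x) : 2 ∣ #s := by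
  have hsq : (τ.subtypePerm hs) ^ 2 = 1 := by
    ext x
    simp [hτ]
  have hsupp : (τ.subtypePerm hs).support = univ := by
    rw [support_subtypePerm]
    ext x
    simpa using hfix x x.2
  simpa [hsupp] using two_dvd_card_support hsq

variable [Fintype α]

def supportOfCycleLength (σ : Perm α) (m : ℕ) : Finset α :=
  {c ∈ σ.cycleFactorsFinset | #c.support = m}.biUnion support

theorem card_supportOfCycleLength (σ : Perm α) (m : ℕ) :
    #(σ.supportOfCycleLength m) = m * σ.cycleType.count m := by
  have hcount : σ.cycleType.count m = #{c ∈ σ.cycleFactorsFinset | #c.support = m} := by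
    rw [cycleType_def, Multiset.count_map]
    simp only [Function.comp_apply, eq_comm]
    rfl
  rw [supportOfCycleLength, card_biUnion, sum_congr rfl fun c hc => (mem_filter.mp hc).2,
    sum_const, smul_eq_mul, hcount, mul_comm]
  exact ((σ.cycleFactorsFinset_pairwise_disjoint).mono (filter_subset _ _)).imp
    fun _ _ h => h.disjoint_support

theorem apply_mem_supportOfCycleLength_of_commute {σ τ : Perm α} (h : Commute τ σ) {m : ℕ}
    {x : α} (hx : x ∈ σ.supportOfCycleLength m) : τ x ∈ σ.supportOfCycleLength m := by
  simp only [supportOfCycleLength, mem_biUnion, mem_filter] at hx ⊢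
  obtain ⟨c, ⟨hc, hcm⟩, hxc⟩ := hx
  have hconj : τ * σ * τ⁻¹ = σ := by rw [h.eq, mul_inv_cancel_right]
  refine ⟨τ * c * τ⁻¹, ⟨?_, ?_⟩, ?_⟩
  · rwa [← hconj, mem_cycleFactorsFinset_conj]
  · rwa [support_conj, card_map]
  · rw [support_conj]
    exact mem_map_of_mem _ hxc

theorem even_count_cycleType_of_commute {σ τ : Perm α} (hτ : τ ^ 2 = 1)
    (hfix : ∀ x, τ x ≠ x) (h : Commute τ σ) {m : ℕ} (hm : Odd m) :
    Even (σ.cycleType.count m) := by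
  have hinv : ∀ x, τ x ∈ σ.supportOfCycleLength m ↔ x ∈ σ.supportOfCycleLength m := by
    refine fun x => ⟨fun hx => ?_, apply_mem_supportOfCycleLength_of_commute h⟩
    have := apply_mem_supportOfCycleLength_of_commute h hx
    rwa [← mul_apply, ← sq, hτ, one_apply] at this
  have h2 := two_dvd_card_of_sq_eq_one_of_apply_ne hτ hinv fun x _ => hfix x
  rw [card_supportOfCycleLength] at h2
  exact even_iff_two_dvd.mpr ((Nat.coprime_two_left.mpr hm).dvd_of_dvd_mul_left h2)

end Equiv.Perm

section PairPartition

variable {W : Type*} [DecidableEq W] {P : Finset (Finset W)}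

theorem exists_partner_of_pair_partition (hcard : ∀ p ∈ P, #p = 2)
    (hdisj : ∀ p ∈ P, ∀ q ∈ P, p ≠ q → Disjoint p q) (hcover : ∀ w : W, ∃ p ∈ P, w ∈ p)
    (w : W) : ∃ x, x ≠ w ∧ ∀ p ∈ P, w ∈ p → p = {w, x} := by
  obtain ⟨p, hp, hwp⟩ := hcover w
  obtain ⟨a, b, hab, rfl⟩ := card_eq_two.mp (hcard p hp)
  have hblock : ∀ q ∈ P, w ∈ q → q = {a, b} := fun q hq hwq => by_contra fun hne =>
    disjoint_left.mp (hdisj q hq _ hp hne) hwq hwp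
  rcases mem_insert.mp hwp with rfl | hwb
  · exact ⟨b, hab.symm, hblock⟩
  · obtain rfl := mem_singleton.mp hwb
    exact ⟨a, hab, pair_comm a w ▸ hblock⟩

theorem exists_involution_commute_of_stable_pair_partition (σ : Perm W)
    (hcard : ∀ p ∈ P, #p = 2) (hdisj : ∀ p ∈ P, ∀ q ∈ P, p ≠ q → Disjoint p q)
    (hcover : ∀ w : W, ∃ p ∈ P, w ∈ p) (hstab : ∀ p ∈ P, p.image σ ∈ P) :
    ∃ τ : Perm W, τ ^ 2 = 1 ∧ (∀ w, τ w ≠ w) ∧ Commute τ σ := by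
  choose f hf_ne hf_block using exists_partner_of_pair_partition hcard hdisj hcover
  have hf_mem : ∀ p ∈ P, ∀ w ∈ p, f w ∈ p := fun p hp w hw => by
    simp [hf_block w p hp hw]
  have heq_f : ∀ p ∈ P, ∀ w ∈ p, ∀ x ∈ p, x ≠ w → x = f w := fun p hp w hw x hx hxw => by
    simpa [hf_block w p hp hw, hxw] using hx
  have hinv : Function.Involutive f := fun w => by
    obtain ⟨p, hp, hwp⟩ := hcover w
    exact (heq_f p hp (f w) (hf_mem p hp w hwp) w hwp (hf_ne w).symm).symm
  refine ⟨hinv.toPerm f, ?_, hf_ne, ?_⟩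
  · ext w
    exact hinv w
  · ext w
    obtain ⟨p, hp, hwp⟩ := hcover w
    exact (heq_f _ (hstab p hp) (σ w) (mem_image_of_mem σ hwp) (σ (f w))
      (mem_image_of_mem σ (hf_mem p hp w hwp)) (σ.injective.ne (hf_ne w))).symm

end PairPartition

theorem no_stable_pair_partition_of_unpaired_odd_cycle_general
    {W : Type*} [Fintype W] [DecidableEq W]
    (σ : Equiv.Perm W)
    (hm : ∃ m : ℕ, Odd m ∧ 1 < m ∧ Odd (σ.cycleType.count m)) :
    ¬∃ P : Finset (Finset W),
      (∀ p ∈ P, p.card = 2) ∧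
      (∀ p ∈ P, ∀ q ∈ P, p ≠ q → Disjoint p q) ∧
      (∀ w : W, ∃ p ∈ P, w ∈ p) ∧
      (∀ p ∈ P, p.image σ ∈ P) := by
  rintro ⟨P, hcard, hdisj, hcover, hstab⟩
  obtain ⟨m, hm_odd, -, hcount⟩ := hm
  obtain ⟨τ, hτ, hfix, hcomm⟩ :=
    exists_involution_commute_of_stable_pair_partition σ hcard hdisj hcover hstab
  exact Nat.not_even_iff_odd.mpr hcount (Perm.even_count_cycleType_of_commute hτ hfix hcomm hm_odd)

/-- If a permutation σ of an 8-element set has some odd cycle length m > 1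
occurring an odd number of times, then there is no ⟨σ⟩-stable partition of
the set into four disjoint pairs. -/
theorem no_stable_pair_partition_of_unpaired_odd_cycle
    {W : Type*} [Fintype W] [DecidableEq W] (hW : Fintype.card W = 8)
    (σ : Equiv.Perm W)
    (hm : ∃ m : ℕ, Odd m ∧ 1 < m ∧ Odd (σ.cycleType.count m)) :
    ¬∃ P : Finset (Finset W),
      (∀ p ∈ P, p.card = 2) ∧
      (∀ p ∈ P, ∀ q ∈ P, p ≠ q → Disjoint p q) ∧
      (∀ w : W, ∃ p ∈ P, w ∈ p) ∧
      (∀ p ∈ P, p.image σ ∈ P) :=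
  no_stable_pair_partition_of_unpaired_odd_cycle_general σ hm
end
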